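/- Let B be a finite set with |B| ≥ 2, m ≥ 2 and s ≥ 1 integers, and t, e ≥ 0 integers. For every integer n ≥ 1 one has n·C(H_{t,e}⟨B,m,s⟩) ≤ C(H_{t,e}⟨B,m,s⟩^n) ≤ n·(s/m)·max{0, m − 2t − e}; in particular C(H_{t,e}⟨B,m,s⟩) ≤ C0(H_{t,e}⟨B,m,s⟩) ≤ (s/m)·max{0, m − 2t − e}. Moreover, there exists q0 such that for every finite field F_q with q ≥ q0, taking B = F_q, all of these inequalities are equalities. -/

import Mathlib

open Set

/-- A code `C` is good for the channel `Ω` if it is nonempty and the fan-out sets of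
distinct codewords are disjoint. -/
def IsGoodCode {X Y : Type*} (Ω : X → Set Y) (C : Finset X) : Prop :=
  C.Nonempty ∧ ∀ x ∈ C, ∀ x' ∈ C, x ≠ x' → Ω x ∩ Ω x' = ∅

/-- The largest cardinality of a good code for `Ω`. -/
noncomputable def maxGoodCode {X Y : Type*} [Fintype X] (Ω : X → Set Y) : ℕ :=
  sSup {n : ℕ | ∃ C : Finset X, IsGoodCode Ω C ∧ C.card = n}

/-- The one-shot capacity of a channel (base-2 logarithm). -/
noncomputable def oneShotCap {X Y : Type*} [Fintype X] (Ω : X → Set Y) : ℝ :=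
  Real.logb 2 (maxGoodCode Ω)

/-- The product of two channels. -/
def chProd {X1 Y1 X2 Y2 : Type*} (Ω1 : X1 → Set Y1) (Ω2 : X2 → Set Y2) :
    X1 × X2 → Set (Y1 × Y2) :=
  fun p => Ω1 p.1 ×ˢ Ω2 p.2

/-- The `n`-th power of a channel. -/
def chPow {X Y : Type*} (Ω : X → Set Y) (n : ℕ) :
    (Fin n → X) → Set (Fin n → Y) :=
  fun x => Set.univ.pi fun k => Ω (x k)

/-- The zero-error capacity of a channel: `sup { C(Ω^n)/n : n ≥ 1 }` (base 2). -/
noncomputable def zeroErrorCap {X Y : Type*} [Fintype X] (Ω : X → Set Y) : ℝ :=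
  sSup {r : ℝ | ∃ n : ℕ, 1 ≤ n ∧ r = oneShotCap (chPow Ω n) / n}

/-- Concatenation of channels: `(Ω1 ▸ Ω2)(x) = ⋃_{y ∈ Ω1(x)} Ω2(y)`. -/
def chConcat {X Y Z : Type*} (Ω1 : X → Set Y) (Ω2 : Y → Set Z) : X → Set Z :=
  fun x => ⋃ y ∈ Ω1 x, Ω2 y

/-- Union of a family of channels with the same alphabets. -/
def chUnion {I X Y : Type*} (Ω : I → X → Set Y) : X → Set Y :=
  fun x => ⋃ i, Ω i x

/-- Channels are isomorphic if there is a bijection of input alphabets preserving the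
adjacency function (i.e. preserving nonemptiness of pairwise intersections of fan-out sets). -/
def ChIso {X1 Y1 X2 Y2 : Type*} (Ω1 : X1 → Set Y1) (Ω2 : X2 → Set Y2) : Prop :=
  ∃ f : X1 ≃ X2, ∀ x x' : X1,
    ((Ω1 x ∩ Ω1 x').Nonempty ↔ (Ω2 (f x) ∩ Ω2 (f x')).Nonempty)

/-- One-shot capacity expressed as a logarithm in base `q`. -/
noncomputable def capBase {X Y : Type*} [Fintype X] (q : ℕ) (Ω : X → Set Y) : ℝ :=
  Real.logb q (maxGoodCode Ω)

/-- Zero-error capacity expressed as a logarithm in base `q`. -/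
noncomputable def zeroCapBase {X Y : Type*} [Fintype X] (q : ℕ) (Ω : X → Set Y) : ℝ :=
  sSup {r : ℝ | ∃ n : ℕ, 1 ≤ n ∧ r = capBase q (chPow Ω n) / n}

/-- The product of a finite family of channels. -/
def chPi {n : ℕ} {X Y : Fin n → Type*} (Ω : ∀ k, X k → Set (Y k)) :
    (∀ k, X k) → Set (∀ k, Y k) :=
  fun x => Set.univ.pi fun k => Ω k (x k)

/-- The `m`-fold concatenation `Ψ 0 ▸ Ψ 1 ▸ ⋯ ▸ Ψ (m-1)` of a chain of channels. -/
def chChain {Z : ℕ → Type*} (Ψ : ∀ i, Z i → Set (Z (i + 1))) : ∀ m, Z 0 → Set (Z m)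
  | 0 => fun x => {x}
  | m + 1 => chConcat (chChain Ψ m) (Ψ m)

/-- Concatenation of a list of channels on a fixed alphabet. -/
def chainList {W : Type*} : List (W → Set W) → (W → Set W)
  | [] => fun x => {x}
  | Ω :: rest => chConcat Ω (chainList rest)

/-- The discrepancy between `y ∈ B̂^m` and `x ∈ B^m`. -/
def discB {B : Type*} [DecidableEq B] {m : ℕ} (y : Fin m → Option B) (x : Fin m → B) : ℕ :=
  (Finset.univ.filter fun i => y i ≠ none ∧ y i ≠ some (x i)).card

/-- The erasure weight of `y ∈ B̂^m`. -/
def erB {B : Type*} [DecidableEq B] {m : ℕ} (y : Fin m → Option B) : ℕ :=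
  (Finset.univ.filter fun i => y i = none).card

/-- The channel `H_{t,e}⟨B,m,s⟩ : (B^m)^s ⇝ (B̂^m)^s`: in each of the `s` components the
adversary can corrupt up to `t` and erase up to `e` sub-components. -/
def HPms (B : Type*) [DecidableEq B] (m s t e : ℕ) :
    (Fin s → Fin m → B) → Set (Fin s → Fin m → Option B) :=
  fun x => {y | ∀ i, discB (y i) (x i) ≤ t ∧ erB (y i) ≤ e}

set_option linter.unusedSectionVars false
set_option linter.unusedVariables false
set_option maxHeartbeats 1000000

section ZEAux

section Blocks
variable {B : Type*} [DecidableEq B] {m t e : ℕ}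

lemma exists_common_block (x x' : Fin m → B) (h : hammingDist x x' ≤ 2*t+e) :
    ∃ y : Fin m → Option B, discB y x ≤ t ∧ discB y x' ≤ t ∧ erB y ≤ e := by
  classical
  set D : Finset (Fin m) := Finset.univ.filter fun j => x j ≠ x' j with hD
  have hDcard : D.card ≤ 2*t+e := h
  obtain ⟨E, hED, hEcard⟩ := D.exists_subset_card_eq (min_le_right e D.card)
  obtain ⟨S, hSD, hScard⟩ := (D \ E).exists_subset_card_eq (min_le_right t (D \ E).card)
  have hEcard' : (D \ E).card = D.card - E.card := Finset.card_sdiff_of_subset hED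
  refine ⟨fun j => if j ∈ E then none else if j ∈ S then some (x' j) else some (x j), ?_, ?_, ?_⟩
  · have : (Finset.univ.filter fun j =>
        (if j ∈ E then none else if j ∈ S then some (x' j) else some (x j)) ≠ none ∧
        (if j ∈ E then none else if j ∈ S then some (x' j) else some (x j)) ≠ some (x j)) = S := by
      ext j
      simp only [Finset.mem_filter, Finset.mem_univ, true_and]
      by_cases hjE : j ∈ E
      · simp only [if_pos hjE]
        have : j ∉ S := fun hj => (Finset.mem_sdiff.mp (hSD hj)).2 hjE
        tauto
      · simp only [if_neg hjE]
        by_cases hjS : j ∈ S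
        · simp only [if_pos hjS]
          have hjD : j ∈ D := (Finset.mem_sdiff.mp (hSD hjS)).1
          have hne : x j ≠ x' j := (Finset.mem_filter.mp hjD).2
          simp [hjS, Option.some_inj]
          exact fun h' => hne h'.symm
        · simp [hjS]
    rw [discB, this, hScard]
    exact min_le_left _ _
  · have : (Finset.univ.filter fun j =>
        (if j ∈ E then none else if j ∈ S then some (x' j) else some (x j)) ≠ none ∧
        (if j ∈ E then none else if j ∈ S then some (x' j) else some (x j)) ≠ some (x' j)) = (D \ E) \ S := by
      ext j
      simp only [Finset.mem_filter, Finset.mem_univ, true_and]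
      by_cases hjE : j ∈ E
      · have : j ∉ (D \ E) \ S := fun hj =>
          (Finset.mem_sdiff.mp (Finset.mem_sdiff.mp hj).1).2 hjE
        simp [if_pos hjE, this]
      · simp only [if_neg hjE]
        by_cases hjS : j ∈ S
        · have : j ∉ (D \ E) \ S := fun hj => (Finset.mem_sdiff.mp hj).2 hjS
          simp [if_pos hjS, this]
        · simp only [if_neg hjS]
          constructor
          · rintro ⟨-, hne⟩
            refine Finset.mem_sdiff.mpr ⟨Finset.mem_sdiff.mpr ⟨?_, hjE⟩, hjS⟩
            exact Finset.mem_filter.mpr ⟨Finset.mem_univ _, fun hxx => hne (by rw [hxx])⟩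
          · intro hj
            have hjD : j ∈ D := (Finset.mem_sdiff.mp (Finset.mem_sdiff.mp hj).1).1
            have hne : x j ≠ x' j := (Finset.mem_filter.mp hjD).2
            exact ⟨Option.some_ne_none _, fun h' => hne (Option.some_inj.mp h')⟩
    rw [discB, this, Finset.card_sdiff_of_subset hSD, hScard]
    omega
  · have : (Finset.univ.filter fun j =>
        (if j ∈ E then none else if j ∈ S then some (x' j) else some (x j)) = none) = E := by
      ext j
      simp only [Finset.mem_filter, Finset.mem_univ, true_and]
      by_cases hjE : j ∈ E
      · simp [hjE]
      · by_cases hjS : j ∈ S <;> simp [hjE, hjS]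
    rw [erB, this, hEcard]
    exact min_le_left _ _

lemma block_dist_le {y : Fin m → Option B} {x x' : Fin m → B}
    (h1 : discB y x ≤ t) (h2 : discB y x' ≤ t) (h3 : erB y ≤ e) :
    hammingDist x x' ≤ 2*t+e := by
  classical
  have hsub : (Finset.univ.filter fun j => x j ≠ x' j) ⊆
      ((Finset.univ.filter fun j => y j ≠ none ∧ y j ≠ some (x j)) ∪
       (Finset.univ.filter fun j => y j ≠ none ∧ y j ≠ some (x' j))) ∪
      (Finset.univ.filter fun j => y j = none) := by
    intro j hj
    have hne : x j ≠ x' j := (Finset.mem_filter.mp hj).2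
    rcases hy : y j with _ | b
    · exact Finset.mem_union_right _ (Finset.mem_filter.mpr ⟨Finset.mem_univ _, hy⟩)
    · refine Finset.mem_union_left _ ?_
      by_cases hb : b = x j
      · refine Finset.mem_union_right _ (Finset.mem_filter.mpr ⟨Finset.mem_univ _, ?_, ?_⟩)
        · simp [hy]
        · simp [hy, hb]; exact fun h' => hne (hb ▸ h')
      · refine Finset.mem_union_left _ (Finset.mem_filter.mpr ⟨Finset.mem_univ _, ?_, ?_⟩)
        · simp [hy]
        · simp [hy]; exact hb
  have := Finset.card_le_card hsub
  have h4 := Finset.card_union_le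
    ((Finset.univ.filter fun j => y j ≠ none ∧ y j ≠ some (x j)) ∪
     (Finset.univ.filter fun j => y j ≠ none ∧ y j ≠ some (x' j)))
    (Finset.univ.filter fun j => y j = none)
  have h5 := Finset.card_union_le
    (Finset.univ.filter fun j => y j ≠ none ∧ y j ≠ some (x j))
    (Finset.univ.filter fun j => y j ≠ none ∧ y j ≠ some (x' j))
  unfold hammingDist
  unfold discB at h1 h2
  unfold erB at h3
  omega

end Blocks

section Gen
variable {X Y : Type*} [Fintype X] (Ω : X → Set Y)

lemma goodSet_bdd : BddAbove {n : ℕ | ∃ C : Finset X, IsGoodCode Ω C ∧ C.card = n} :=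
  ⟨Fintype.card X, fun n ⟨C, _, hc⟩ => hc ▸ Finset.card_le_univ C⟩

lemma goodSet_nonempty [Nonempty X] :
    {n : ℕ | ∃ C : Finset X, IsGoodCode Ω C ∧ C.card = n}.Nonempty := by
  refine ⟨1, {Classical.arbitrary X}, ⟨⟨_, Finset.mem_singleton_self _⟩, ?_⟩,
    Finset.card_singleton _⟩
  intro x hx x' hx' hne
  rw [Finset.mem_singleton] at hx hx'
  exact absurd (hx.trans hx'.symm) hne

lemma maxGoodCode_spec [Nonempty X] :
    ∃ C : Finset X, IsGoodCode Ω C ∧ C.card = maxGoodCode Ω :=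
  Nat.sSup_mem (goodSet_nonempty Ω) (goodSet_bdd Ω)

lemma card_le_maxGoodCode {C : Finset X} (h : IsGoodCode Ω C) : C.card ≤ maxGoodCode Ω :=
  le_csSup (goodSet_bdd Ω) ⟨C, h, rfl⟩

lemma one_le_maxGoodCode [Nonempty X] : 1 ≤ maxGoodCode Ω := by
  obtain ⟨C, ⟨hne, _⟩, hc⟩ := maxGoodCode_spec Ω
  rw [← hc]
  exact Finset.card_pos.mpr hne

lemma chPow_inter_empty_of {n : ℕ} {x x' : Fin n → X} (k : Fin n)
    (h : Ω (x k) ∩ Ω (x' k) = ∅) : chPow Ω n x ∩ chPow Ω n x' = ∅ := by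
  ext f
  simp only [Set.mem_inter_iff, Set.mem_empty_iff_false, iff_false, not_and]
  intro h1 h2
  have : f k ∈ Ω (x k) ∩ Ω (x' k) := ⟨h1 k (Set.mem_univ _), h2 k (Set.mem_univ _)⟩
  rw [h] at this
  exact this

lemma chPow_inter_nonempty {n : ℕ} {x x' : Fin n → X}
    (h : ∀ k, (Ω (x k) ∩ Ω (x' k)).Nonempty) :
    (chPow Ω n x ∩ chPow Ω n x').Nonempty := by
  choose g hg1 hg2 using h
  exact ⟨g, fun k _ => hg1 k, fun k _ => hg2 k⟩

lemma pow_le_maxGoodCode_chPow [Nonempty X] (n : ℕ) :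
    maxGoodCode Ω ^ n ≤ maxGoodCode (chPow Ω n) := by
  obtain ⟨C, ⟨hne, hgood⟩, hc⟩ := maxGoodCode_spec Ω
  have hD : IsGoodCode (chPow Ω n) (Fintype.piFinset fun _ : Fin n => C) := by
    constructor
    · exact Fintype.piFinset_nonempty.mpr fun _ => hne
    · intro x hx x' hx' hne'
      obtain ⟨k, hk⟩ := Function.ne_iff.mp hne'
      exact chPow_inter_empty_of Ω k
        (hgood _ (Fintype.mem_piFinset.mp hx k) _ (Fintype.mem_piFinset.mp hx' k) hk)
  have := card_le_maxGoodCode _ hD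
  rwa [Fintype.card_piFinset_const, hc] at this

end Gen

lemma card_filter_le_val {m u : ℕ} (hu : u ≤ m) :
    (Finset.univ.filter fun j : Fin m => u ≤ (j : ℕ)).card = m - u := by
  have : (Finset.univ.filter fun j : Fin m => u ≤ (j : ℕ)) =
      Finset.image (fun j : Fin (m - u) => (⟨u + j, by omega⟩ : Fin m)) Finset.univ := by
    ext j
    simp only [Finset.mem_filter, Finset.mem_univ, true_and, Finset.mem_image]
    constructor
    · intro hj
      refine ⟨⟨(j : ℕ) - u, by omega⟩, ?_⟩
      apply Fin.ext
      simp
      omega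
    · rintro ⟨i, rfl⟩
      simp
  rw [this, Finset.card_image_of_injective _ (fun a b hab => by
    simpa [Fin.ext_iff] using hab), Finset.card_univ, Fintype.card_fin]

lemma exists_mds (F : Type*) [Field F] [Fintype F] [DecidableEq F] {m k : ℕ}
    (hk : 1 ≤ k) (hkm : k ≤ m) (hq : m ≤ Fintype.card F) :
    ∃ C : Finset (Fin m → F), C.card = Fintype.card F ^ k ∧
      ∀ x ∈ C, ∀ x' ∈ C, x ≠ x' → m - k + 1 ≤ hammingDist x x' := by
  obtain ⟨α⟩ : Nonempty (Fin m ↪ F) :=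
    Function.Embedding.nonempty_of_card_le (by simpa using hq)
  set ev : (Fin k → F) → Fin m → F := fun c j => ∑ i, c i * α j ^ (i : ℕ) with hev
  have key : ∀ c c' : Fin k → F, c ≠ c' → m - k + 1 ≤ hammingDist (ev c) (ev c') := by
    intro c c' hne
    set A : Finset (Fin m) := Finset.univ.filter fun j => ev c j = ev c' j with hA
    have hAcard : A.card ≤ k - 1 := by
      by_contra hcon
      push_neg at hcon
      have hkA : k ≤ A.card := by omega
      obtain ⟨T, hTA, hTcard⟩ := A.exists_subset_card_eq hkA
      set g := T.orderIsoOfFin hTcard with hg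
      set β : Fin k → F := fun i => α ((g i : Fin m)) with hβ
      have hβinj : Function.Injective β := by
        intro a b hab
        have : (g a : Fin m) = (g b : Fin m) := α.injective hab
        exact g.injective (Subtype.ext this)
      have hdet : (Matrix.vandermonde β).det ≠ 0 :=
        Matrix.det_vandermonde_ne_zero_iff.mpr hβinj
      have hinj : Function.Injective (Matrix.vandermonde β).mulVec :=
        Matrix.mulVec_injective_iff_isUnit.mpr
          ((Matrix.isUnit_iff_isUnit_det _).mpr (Ne.isUnit hdet))
      apply hne
      apply hinj
      funext i
      have hgi : (g i : Fin m) ∈ A := hTA (g i).2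
      have := (Finset.mem_filter.mp hgi).2
      simpa [Matrix.mulVec, Matrix.vandermonde, dotProduct, hev, hβ, mul_comm] using this
    have hcompl : (Finset.univ.filter fun j => ev c j ≠ ev c' j) = Finset.univ \ A := by
      ext j; simp [hA]
    have : hammingDist (ev c) (ev c') = m - A.card := by
      unfold hammingDist
      rw [hcompl, Finset.card_sdiff_of_subset (Finset.subset_univ _), Finset.card_univ, Fintype.card_fin]
    omega
  have hevinj : Function.Injective ev := by
    intro c c' h
    by_contra hne
    have := key c c' hne
    rw [h, hammingDist_self] at this
    omega
  refine ⟨Finset.univ.image ev, ?_, ?_⟩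
  · rw [Finset.card_image_of_injective _ hevinj, Finset.card_univ, Fintype.card_fun,
      Fintype.card_fin]
  · intro x hx x' hx' hne
    obtain ⟨c, -, rfl⟩ := Finset.mem_image.mp hx
    obtain ⟨c', -, rfl⟩ := Finset.mem_image.mp hx'
    exact key c c' (fun h => hne (by rw [h]))

section HP
variable {B : Type*} [Fintype B] [DecidableEq B] {m s t e : ℕ}

lemma HPms_inter_empty {x x' : Fin s → Fin m → B} (i : Fin s)
    (h : 2*t+e+1 ≤ hammingDist (x i) (x' i)) :
    HPms B m s t e x ∩ HPms B m s t e x' = ∅ := by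
  ext y
  simp only [Set.mem_inter_iff, Set.mem_empty_iff_false, iff_false, not_and]
  intro h1 h2
  have := block_dist_le (h1 i).1 (h2 i).1 (h1 i).2
  omega

lemma HPms_inter_nonempty {x x' : Fin s → Fin m → B}
    (h : ∀ i, hammingDist (x i) (x' i) ≤ 2*t+e) :
    (HPms B m s t e x ∩ HPms B m s t e x').Nonempty := by
  choose y hy1 hy2 hy3 using fun i => exists_common_block (x i) (x' i) (h i)
  exact ⟨y, fun i => ⟨hy1 i, hy3 i⟩, fun i => ⟨hy2 i, hy3 i⟩⟩

lemma dist_le_of_punct {u : ℕ} (hum : u ≤ m) {a b : Fin m → B}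
    (hab : ∀ j : Fin u, a (Fin.castLE hum j) = b (Fin.castLE hum j)) (hte : m - u ≤ 2*t+e) :
    hammingDist a b ≤ 2*t+e := by
  have hsub : (Finset.univ.filter fun j : Fin m => a j ≠ b j) ⊆
      Finset.univ.filter fun j : Fin m => u ≤ (j : ℕ) := by
    intro j hj
    simp only [Finset.mem_filter, Finset.mem_univ, true_and] at hj ⊢
    by_contra hju
    push_neg at hju
    have := hab ⟨(j : ℕ), hju⟩
    rw [show Fin.castLE hum ⟨(j : ℕ), hju⟩ = j from Fin.ext rfl] at this
    exact hj this
  have hcard := Finset.card_le_card hsub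
  rw [card_filter_le_val hum] at hcard
  calc hammingDist a b ≤ m - u := hcard
    _ ≤ 2*t+e := hte

lemma good_card_le_pow {n : ℕ} {C : Finset (Fin n → Fin s → Fin m → B)}
    (hC : IsGoodCode (chPow (HPms B m s t e) n) C) :
    C.card ≤ Fintype.card B ^ ((m - (2*t+e)) * s * n) := by
  classical
  set u := m - (2*t+e) with hu
  have hum : u ≤ m := Nat.sub_le _ _
  set φ : (Fin n → Fin s → Fin m → B) → (Fin n → Fin s → Fin u → B) :=
    fun x k i j => x k i (Fin.castLE hum j) with hφ
  have hinj : Set.InjOn φ C := by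
    intro x hx x' hx' hxx
    by_contra hne
    have hdisj := hC.2 x hx x' hx' hne
    have hnonempty : (chPow (HPms B m s t e) n x ∩ chPow (HPms B m s t e) n x').Nonempty := by
      apply chPow_inter_nonempty
      intro k
      apply HPms_inter_nonempty
      intro i
      exact dist_le_of_punct hum
        (fun j => congrFun (congrFun (congrFun hxx k) i) j) (by omega)
    rw [hdisj] at hnonempty
    exact Set.not_nonempty_empty hnonempty
  calc C.card = (C.image φ).card := (Finset.card_image_of_injOn hinj).symm
    _ ≤ Fintype.card (Fin n → Fin s → Fin u → B) := Finset.card_le_univ _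
    _ = Fintype.card B ^ (u * s * n) := by
        rw [Fintype.card_fun, Fintype.card_fun, Fintype.card_fun, Fintype.card_fin,
          Fintype.card_fin, Fintype.card_fin, ← pow_mul, ← pow_mul, mul_assoc]

lemma good_card_le_one {C : Finset (Fin s → Fin m → B)}
    (hC : IsGoodCode (HPms B m s t e) C) :
    C.card ≤ Fintype.card B ^ ((m - (2*t+e)) * s) := by
  classical
  set u := m - (2*t+e) with hu
  have hum : u ≤ m := Nat.sub_le _ _
  set φ : (Fin s → Fin m → B) → (Fin s → Fin u → B) :=
    fun x i j => x i (Fin.castLE hum j) with hφ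
  have hinj : Set.InjOn φ C := by
    intro x hx x' hx' hxx
    by_contra hne
    have hdisj := hC.2 x hx x' hx' hne
    have hnonempty : (HPms B m s t e x ∩ HPms B m s t e x').Nonempty := by
      apply HPms_inter_nonempty
      intro i
      exact dist_le_of_punct hum (fun j => congrFun (congrFun hxx i) j) (by omega)
    rw [hdisj] at hnonempty
    exact Set.not_nonempty_empty hnonempty
  calc C.card = (C.image φ).card := (Finset.card_image_of_injOn hinj).symm
    _ ≤ Fintype.card (Fin s → Fin u → B) := Finset.card_le_univ _
    _ = Fintype.card B ^ (u * s) := by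
        rw [Fintype.card_fun, Fintype.card_fun, Fintype.card_fin, Fintype.card_fin, ← pow_mul]

lemma maxGood_ge_of_mds {C0 : Finset (Fin m → B)} (h0 : C0.Nonempty)
    (hd : ∀ x ∈ C0, ∀ x' ∈ C0, x ≠ x' → 2*t+e+1 ≤ hammingDist x x') :
    C0.card ^ s ≤ maxGoodCode (HPms B m s t e) := by
  have hD : IsGoodCode (HPms B m s t e) (Fintype.piFinset fun _ : Fin s => C0) := by
    constructor
    · exact Fintype.piFinset_nonempty.mpr fun _ => h0
    · intro x hx x' hx' hne
      obtain ⟨i, hi⟩ := Function.ne_iff.mp hne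
      exact HPms_inter_empty i
        (hd _ (Fintype.mem_piFinset.mp hx i) _ (Fintype.mem_piFinset.mp hx' i) hi)
  have := card_le_maxGoodCode _ hD
  rwa [Fintype.card_piFinset_const] at this

end HP

lemma logb_pow_div {q mm : ℕ} (hq : 2 ≤ q) (hm : 1 ≤ mm) (N : ℕ) :
    Real.logb ((q : ℝ) ^ mm) ((q : ℝ) ^ N) = (N : ℝ) / mm := by
  have hq1 : (1 : ℝ) < q := by exact_mod_cast hq
  have hlog : Real.log q ≠ 0 := (Real.log_pos hq1).ne'
  rw [Real.logb, Real.log_pow, Real.log_pow]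
  rw [mul_div_mul_right _ _ hlog]

lemma one_lt_base {q mm : ℕ} (hq : 2 ≤ q) (hm : 1 ≤ mm) :
    (1 : ℝ) < ((q ^ mm : ℕ) : ℝ) := by
  have : (1 : ℝ) < (q : ℝ) := by exact_mod_cast hq
  push_cast
  exact one_lt_pow₀ this (by omega)

lemma capBase_le_of {q mm : ℕ} {X Y : Type*} [Fintype X] [Nonempty X] (hq : 2 ≤ q)
    (hm : 1 ≤ mm) {Ω : X → Set Y} {N : ℕ} (h : maxGoodCode Ω ≤ q ^ N) :
    capBase (q ^ mm) Ω ≤ (N : ℝ) / mm := by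
  have h1 : 1 ≤ maxGoodCode Ω := one_le_maxGoodCode Ω
  unfold capBase
  rw [show ((q ^ mm : ℕ) : ℝ) = (q : ℝ) ^ mm by push_cast; ring]
  calc Real.logb ((q : ℝ) ^ mm) (maxGoodCode Ω)
      ≤ Real.logb ((q : ℝ) ^ mm) ((q : ℝ) ^ N) := by
        apply Real.logb_le_logb_of_le
        · rw [show ((q:ℝ)^mm) = ((q^mm : ℕ) : ℝ) by push_cast; ring]
          exact one_lt_base hq hm
        · exact_mod_cast h1
        · exact_mod_cast h
    _ = (N : ℝ) / mm := logb_pow_div hq hm N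

lemma capBase_ge_of {q mm : ℕ} {X Y : Type*} [Fintype X] (hq : 2 ≤ q)
    (hm : 1 ≤ mm) {Ω : X → Set Y} {N : ℕ} (h : q ^ N ≤ maxGoodCode Ω) :
    (N : ℝ) / mm ≤ capBase (q ^ mm) Ω := by
  unfold capBase
  rw [show ((q ^ mm : ℕ) : ℝ) = (q : ℝ) ^ mm by push_cast; ring]
  calc ((N : ℝ)) / mm = Real.logb ((q : ℝ) ^ mm) ((q : ℝ) ^ N) := (logb_pow_div hq hm N).symm
    _ ≤ Real.logb ((q : ℝ) ^ mm) (maxGoodCode Ω) := by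
        apply Real.logb_le_logb_of_le
        · rw [show ((q:ℝ)^mm) = ((q^mm : ℕ) : ℝ) by push_cast; ring]
          exact one_lt_base hq hm
        · positivity
        · exact_mod_cast h

lemma capBase_eq_of {q mm : ℕ} {X Y : Type*} [Fintype X] [Nonempty X] (hq : 2 ≤ q)
    (hm : 1 ≤ mm) {Ω : X → Set Y} {N : ℕ} (h : maxGoodCode Ω = q ^ N) :
    capBase (q ^ mm) Ω = (N : ℝ) / mm :=
  le_antisymm (capBase_le_of hq hm h.le) (capBase_ge_of hq hm h.ge)

lemma nsmul_capBase_le_chPow {q mm : ℕ} {X Y : Type*} [Fintype X] [Nonempty X] (hq : 2 ≤ q)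
    (hm : 1 ≤ mm) (Ω : X → Set Y) (n : ℕ) :
    (n : ℝ) * capBase (q ^ mm) Ω ≤ capBase (q ^ mm) (chPow Ω n) := by
  have h1 : 1 ≤ maxGoodCode Ω := one_le_maxGoodCode Ω
  have h2 := pow_le_maxGoodCode_chPow Ω n
  have hb : (1 : ℝ) < ((q ^ mm : ℕ) : ℝ) := one_lt_base hq hm
  unfold capBase
  rw [← Real.logb_pow]
  apply Real.logb_le_logb_of_le hb
  · positivity
  · rw [show ((maxGoodCode Ω : ℝ)) ^ n = ((maxGoodCode Ω ^ n : ℕ) : ℝ) by push_cast; ring]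
    exact_mod_cast h2

lemma cast_sub_max {m t e : ℕ} :
    ((m - (2 * t + e) : ℕ) : ℝ) = max 0 ((m : ℝ) - 2 * t - e) := by
  rcases le_total (2 * t + e) m with h | h
  · rw [Nat.cast_sub h, max_eq_right]
    · push_cast; ring
    · have : (2 * t + e : ℝ) ≤ (m : ℝ) := by exact_mod_cast h
      linarith
  · rw [Nat.sub_eq_zero_of_le h, max_eq_left]
    · simp
    · have : (m : ℝ) ≤ (2 * t + e : ℝ) := by exact_mod_cast h
      linarith

end ZEAux

lemma main_gen {B : Type*} [Fintype B] [DecidableEq B]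
    (hB : 2 ≤ Fintype.card B) {m s : ℕ} (hm : 2 ≤ m) (hs : 1 ≤ s) (t e : ℕ) :
    (∀ n : ℕ, 1 ≤ n →
        (n : ℝ) * capBase (Fintype.card B ^ m) (HPms B m s t e)
          ≤ capBase (Fintype.card B ^ m) (chPow (HPms B m s t e) n) ∧
        capBase (Fintype.card B ^ m) (chPow (HPms B m s t e) n)
          ≤ (n : ℝ) * ((s : ℝ) / m) * max 0 ((m : ℝ) - 2 * t - e)) ∧
      capBase (Fintype.card B ^ m) (HPms B m s t e)
        ≤ zeroCapBase (Fintype.card B ^ m) (HPms B m s t e) ∧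
      zeroCapBase (Fintype.card B ^ m) (HPms B m s t e)
        ≤ ((s : ℝ) / m) * max 0 ((m : ℝ) - 2 * t - e) := by
  classical
  have hm1 : 1 ≤ m := by omega
  have hBne : Nonempty B := Fintype.card_pos_iff.mp (by omega)
  have hXne : Nonempty (Fin s → Fin m → B) := ⟨fun _ _ => Classical.arbitrary B⟩
  set Ω := HPms B m s t e with hΩ
  set q := Fintype.card B with hqdef
  set u := m - (2 * t + e) with hudef
  have upper : ∀ n : ℕ, capBase (q ^ m) (chPow Ω n)
      ≤ (n : ℝ) * ((s : ℝ) / m) * max 0 ((m : ℝ) - 2 * t - e) := by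
    intro n
    have hle : maxGoodCode (chPow Ω n) ≤ q ^ (u * s * n) := by
      obtain ⟨C, hC, hCcard⟩ := maxGoodCode_spec (chPow Ω n)
      rw [← hCcard]
      exact good_card_le_pow hC
    calc capBase (q ^ m) (chPow Ω n) ≤ ((u * s * n : ℕ) : ℝ) / m := capBase_le_of hB hm1 hle
      _ = (n : ℝ) * ((s : ℝ) / m) * max 0 ((m : ℝ) - 2 * t - e) := by
          rw [← cast_sub_max (m := m) (t := t) (e := e), hudef]
          push_cast
          ring
  have lower : ∀ n : ℕ, (n : ℝ) * capBase (q ^ m) Ω ≤ capBase (q ^ m) (chPow Ω n) :=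
    fun n => nsmul_capBase_le_chPow hB hm1 Ω n
  have hbound0 : 0 ≤ ((s : ℝ) / m) * max 0 ((m : ℝ) - 2 * t - e) :=
    mul_nonneg (by positivity) (le_max_left _ _)
  have hel : ∀ n : ℕ, 1 ≤ n → capBase (q ^ m) (chPow Ω n) / n
      ≤ ((s : ℝ) / m) * max 0 ((m : ℝ) - 2 * t - e) := by
    intro n hn
    have hnpos : (0 : ℝ) < n := by exact_mod_cast hn
    rw [div_le_iff₀ hnpos]
    calc capBase (q ^ m) (chPow Ω n)
        ≤ (n : ℝ) * ((s : ℝ) / m) * max 0 ((m : ℝ) - 2 * t - e) := upper n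
      _ = ((s : ℝ) / m) * max 0 ((m : ℝ) - 2 * t - e) * n := by ring
  refine ⟨fun n hn => ⟨lower n, upper n⟩, ?_, ?_⟩
  · have hbdd : BddAbove {r : ℝ | ∃ n : ℕ, 1 ≤ n ∧ r = capBase (q ^ m) (chPow Ω n) / n} := by
      refine ⟨((s : ℝ) / m) * max 0 ((m : ℝ) - 2 * t - e), ?_⟩
      rintro r ⟨n, hn, rfl⟩
      exact hel n hn
    have hmem : capBase (q ^ m) (chPow Ω 1) / ((1 : ℕ) : ℝ)
        ∈ {r : ℝ | ∃ n : ℕ, 1 ≤ n ∧ r = capBase (q ^ m) (chPow Ω n) / n} :=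
      ⟨1, le_refl 1, rfl⟩
    have h1 := le_csSup hbdd hmem
    have h2 : capBase (q ^ m) Ω ≤ capBase (q ^ m) (chPow Ω 1) := by
      have := lower 1
      push_cast at this
      linarith
    unfold zeroCapBase
    refine le_trans ?_ h1
    rw [Nat.cast_one, div_one]
    exact h2
  · apply Real.sSup_le _ hbound0
    rintro r ⟨n, hn, rfl⟩
    exact hel n hn

lemma main_field (F : Type*) [Field F] [Fintype F] [DecidableEq F]
    {m s : ℕ} (hm : 2 ≤ m) (hs : 1 ≤ s) (t e : ℕ) (hqF : m ≤ Fintype.card F) :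
    (∀ n : ℕ, 1 ≤ n →
        (n : ℝ) * capBase (Fintype.card F ^ m) (HPms F m s t e)
          = capBase (Fintype.card F ^ m) (chPow (HPms F m s t e) n) ∧
        capBase (Fintype.card F ^ m) (chPow (HPms F m s t e) n)
          = (n : ℝ) * ((s : ℝ) / m) * max 0 ((m : ℝ) - 2 * t - e)) ∧
      capBase (Fintype.card F ^ m) (HPms F m s t e)
        = zeroCapBase (Fintype.card F ^ m) (HPms F m s t e) ∧
      zeroCapBase (Fintype.card F ^ m) (HPms F m s t e)
        = ((s : ℝ) / m) * max 0 ((m : ℝ) - 2 * t - e) := by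
  classical
  have hF2 : 2 ≤ Fintype.card F := Fintype.one_lt_card
  have hm1 : 1 ≤ m := by omega
  have hXne : Nonempty (Fin s → Fin m → F) := ⟨fun _ _ => 0⟩
  set Ω := HPms F m s t e with hΩ
  set q := Fintype.card F with hqdef
  set u := m - (2 * t + e) with hudef
  have hlow : q ^ (u * s) ≤ maxGoodCode Ω := by
    rcases Nat.eq_zero_or_pos u with h0 | hpos
    · rw [h0, Nat.zero_mul, pow_zero]
      exact one_le_maxGoodCode Ω
    · obtain ⟨C0, hC0card, hC0d⟩ := exists_mds F hpos (Nat.sub_le _ _) hqF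
      have h2te : m - u = 2 * t + e := by omega
      have h0ne : C0.Nonempty := Finset.card_pos.mp (by
        rw [hC0card]
        exact pow_pos (by omega) u)
      have hd : ∀ x ∈ C0, ∀ x' ∈ C0, x ≠ x' → 2 * t + e + 1 ≤ hammingDist x x' := by
        intro x hx x' hx' hne
        have := hC0d x hx x' hx' hne
        omega
      have := maxGood_ge_of_mds (s := s) (t := t) (e := e) h0ne hd
      rwa [hC0card, ← pow_mul] at this
  have hup : maxGoodCode Ω ≤ q ^ (u * s) := by
    obtain ⟨C, hC, hCcard⟩ := maxGoodCode_spec Ω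
    rw [← hCcard]
    exact good_card_le_one hC
  have hmaxΩ : maxGoodCode Ω = q ^ (u * s) := le_antisymm hup hlow
  have hmaxPow : ∀ n : ℕ, maxGoodCode (chPow Ω n) = q ^ (u * s * n) := by
    intro n
    refine le_antisymm ?_ ?_
    · obtain ⟨C, hC, hCcard⟩ := maxGoodCode_spec (chPow Ω n)
      rw [← hCcard]
      exact good_card_le_pow hC
    · have := pow_le_maxGoodCode_chPow Ω n
      rwa [hmaxΩ, ← pow_mul] at this
  have hcapΩ : capBase (q ^ m) Ω = ((u * s : ℕ) : ℝ) / m := capBase_eq_of hF2 hm1 hmaxΩ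
  have hcapPow : ∀ n : ℕ, capBase (q ^ m) (chPow Ω n) = ((u * s * n : ℕ) : ℝ) / m :=
    fun n => capBase_eq_of hF2 hm1 (hmaxPow n)
  have hval : ((u * s : ℕ) : ℝ) / m = ((s : ℝ) / m) * max 0 ((m : ℝ) - 2 * t - e) := by
    rw [← cast_sub_max (m := m) (t := t) (e := e), hudef]
    push_cast
    ring
  have hset : {r : ℝ | ∃ n : ℕ, 1 ≤ n ∧ r = capBase (q ^ m) (chPow Ω n) / n}
      = {((u * s : ℕ) : ℝ) / m} := by
    ext r
    simp only [Set.mem_setOf_eq, Set.mem_singleton_iff]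
    constructor
    · rintro ⟨n, hn, rfl⟩
      rw [hcapPow]
      have hn0 : (n : ℝ) ≠ 0 := by
        have : (0 : ℝ) < n := by exact_mod_cast hn
        exact this.ne'
      have hm0 : (m : ℝ) ≠ 0 := by
        have : (0 : ℝ) < m := by exact_mod_cast hm1
        exact this.ne'
      push_cast
      field_simp
    · intro hr
      refine ⟨1, le_refl 1, ?_⟩
      rw [hcapPow 1, hr]
      push_cast
      ring
  have hzero : zeroCapBase (q ^ m) Ω = ((u * s : ℕ) : ℝ) / m := by
    unfold zeroCapBase
    rw [hset]
    exact csSup_singleton _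
  refine ⟨fun n hn => ⟨?_, ?_⟩, ?_, ?_⟩
  · rw [hcapΩ, hcapPow]
    push_cast
    ring
  · rw [hcapPow, ← cast_sub_max (m := m) (t := t) (e := e), hudef]
    push_cast
    ring
  · rw [hcapΩ, hzero]
  · rw [hzero, hval]

/-- for the product-alphabet channel `H_{t,e}⟨B,m,s⟩` one has, for all
`n ≥ 1`, `n·C ≤ C(Ω^n) ≤ n·(s/m)·max{0, m−2t−e}`; in particular
`C ≤ C0 ≤ (s/m)·max{0, m−2t−e}`; moreover for all sufficiently large finite fields
(taken as `B`) all these inequalities are equalities. -/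
theorem capBase_HPms_bounds {B : Type*} [Fintype B] [DecidableEq B]
    (hB : 2 ≤ Fintype.card B) {m s : ℕ} (hm : 2 ≤ m) (hs : 1 ≤ s) (t e : ℕ) :
    ((∀ n : ℕ, 1 ≤ n →
        (n : ℝ) * capBase (Fintype.card B ^ m) (HPms B m s t e)
          ≤ capBase (Fintype.card B ^ m) (chPow (HPms B m s t e) n) ∧
        capBase (Fintype.card B ^ m) (chPow (HPms B m s t e) n)
          ≤ (n : ℝ) * ((s : ℝ) / m) * max 0 ((m : ℝ) - 2 * t - e)) ∧
      capBase (Fintype.card B ^ m) (HPms B m s t e)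
        ≤ zeroCapBase (Fintype.card B ^ m) (HPms B m s t e) ∧
      zeroCapBase (Fintype.card B ^ m) (HPms B m s t e)
        ≤ ((s : ℝ) / m) * max 0 ((m : ℝ) - 2 * t - e)) ∧
    ∃ q0 : ℕ, ∀ (F : Type) [Field F] [Fintype F] [DecidableEq F],
      q0 ≤ Fintype.card F →
      (∀ n : ℕ, 1 ≤ n →
        (n : ℝ) * capBase (Fintype.card F ^ m) (HPms F m s t e)
          = capBase (Fintype.card F ^ m) (chPow (HPms F m s t e) n) ∧
        capBase (Fintype.card F ^ m) (chPow (HPms F m s t e) n)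
          = (n : ℝ) * ((s : ℝ) / m) * max 0 ((m : ℝ) - 2 * t - e)) ∧
      capBase (Fintype.card F ^ m) (HPms F m s t e)
        = zeroCapBase (Fintype.card F ^ m) (HPms F m s t e) ∧
      zeroCapBase (Fintype.card F ^ m) (HPms F m s t e)
        = ((s : ℝ) / m) * max 0 ((m : ℝ) - 2 * t - e) :=
  ⟨main_gen hB hm hs t e, m, fun F _ _ _ hF => main_field F hm hs t e hF⟩
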